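/- arXiv:2201.12278 — 2 statements merged into one kernel-verified Lean document; each statement's English description precedes it below -/
import Mathlib

section
/- Let B ∈ ℝ^{n×m} with rank(B) = n, let 𝒰 = [−1,1]^m, and let C ∈ ℝ^{n×p}, 𝒲 = [−1,1]^p. If −C𝒲 := {−Cw : w ∈ 𝒲} is contained in the interior of B𝒰 := {Bu : u ∈ 𝒰}, then 0 lies in the interior of the set 𝒵 := {z ∈ B𝒰 : z − Cw ∈ B𝒰 for all w ∈ 𝒲}. -/
theorem zero_mem_interior_Z (n m p : ℕ)
    (B : Matrix (Fin n) (Fin m) ℝ) (C : Matrix (Fin n) (Fin p) ℝ)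
    (hrank : B.rank = n)
    (h : -(Matrix.mulVec C '' {w : Fin p → ℝ | ∀ i, |w i| ≤ 1}) ⊆
        interior (Matrix.mulVec B '' {u : Fin m → ℝ | ∀ i, |u i| ≤ 1})) :
    (0 : Fin n → ℝ) ∈ interior
      {z ∈ Matrix.mulVec B '' {u : Fin m → ℝ | ∀ i, |u i| ≤ 1} |
        ∀ w ∈ {w : Fin p → ℝ | ∀ i, |w i| ≤ 1},
          z - Matrix.mulVec C w ∈ Matrix.mulVec B '' {u : Fin m → ℝ | ∀ i, |u i| ≤ 1}} := by
  set W := {w : Fin p → ℝ | ∀ i, |w i| ≤ 1} with hWdef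
  set U := {u : Fin m → ℝ | ∀ i, |u i| ≤ 1} with hUdef
  have hWc : IsCompact W := by
    have hEq : W = Set.pi Set.univ (fun _ : Fin p => Set.Icc (-1:ℝ) 1) := by
      ext w; simp [hWdef, Set.mem_pi, abs_le, Pi.le_def, forall_and]
    rw [hEq]; exact isCompact_univ_pi fun _ => isCompact_Icc
  have hC : Continuous (Matrix.mulVec C) := by
    have := LinearMap.continuous_of_finiteDimensional (Matrix.mulVecLin C)
    simpa [Matrix.coe_mulVecLin] using this
  have hKc : IsCompact (-(Matrix.mulVec C '' W)) := (hWc.image hC).neg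
  obtain ⟨δ, hδ, hsub⟩ := hKc.exists_thickening_subset_open isOpen_interior h
  apply mem_interior.2
  refine ⟨Metric.ball 0 δ, ?_, Metric.isOpen_ball, Metric.mem_ball_self hδ⟩
  intro z hz
  have hz' : dist z (0 : Fin n → ℝ) < δ := hz
  have hthick : ∀ w ∈ W, z - Matrix.mulVec C w ∈ Matrix.mulVec B '' U := by
    intro w hw
    have hmem : -(Matrix.mulVec C w) ∈ -(Matrix.mulVec C '' W) := by
      simpa using Set.mem_image_of_mem (Matrix.mulVec C) hw
    have hth : z - Matrix.mulVec C w ∈ Metric.thickening δ (-(Matrix.mulVec C '' W)) := by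
      rw [Metric.mem_thickening_iff]
      refine ⟨-(Matrix.mulVec C w), hmem, ?_⟩
      have : dist (z - Matrix.mulVec C w) (-(Matrix.mulVec C w)) = dist z 0 := by
        simp [dist_eq_norm, sub_neg_eq_add, sub_add_cancel]
      rw [this]; exact hz'
    exact interior_subset (hsub hth)
  have h0W : (0 : Fin p → ℝ) ∈ W := fun i => by simp
  have hzU : z ∈ Matrix.mulVec B '' U := by
    have := hthick 0 h0W
    simpa [Matrix.mulVec_zero] using this
  exact ⟨hzU, hthick⟩
end

section
/- Let A be an n×n real matrix, P, Q symmetric positive definite n×n matrices with AᵀP + PA = −Q. Let u : [0,∞) → ℝⁿ be continuous with ‖u(t)‖_P ≤ β for all t, and let x solve x'(t) = A x(t) + u(t). Then the function V(t) = x(t)ᵀP x(t) satisfies V'(t) ≥ −(λ_max(Q)/λ_min(P))·V(t) − 2β·√(V(t)) for all t. -/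
open Matrix

private lemma dot_sym {n : ℕ} {P : Matrix (Fin n) (Fin n) ℝ} (hP : P.IsHermitian)
    (v w : Fin n → ℝ) : v ⬝ᵥ (P *ᵥ w) = w ⬝ᵥ (P *ᵥ v) := by
  have hPt : Pᵀ = P := by
    rw [← conjTranspose_eq_transpose_of_trivial]; exact hP
  rw [Matrix.dotProduct_mulVec, ← Matrix.mulVec_transpose, hPt, dotProduct_comm]

private lemma dot_reduce {n : ℕ} (M : Matrix (Fin n) (Fin n) ℝ) (hM : M.IsHermitian)
    (x : Fin n → ℝ) :
    (x ⬝ᵥ (M *ᵥ x) = ∑ i, hM.eigenvalues i * ((star (hM.eigenvectorUnitary : Matrix (Fin n) (Fin n) ℝ) *ᵥ x) i)^2)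
    ∧ x ⬝ᵥ x = ∑ i, ((star (hM.eigenvectorUnitary : Matrix (Fin n) (Fin n) ℝ) *ᵥ x) i)^2 := by
  set U : Matrix (Fin n) (Fin n) ℝ := (hM.eigenvectorUnitary : Matrix (Fin n) (Fin n) ℝ) with hU
  set y : Fin n → ℝ := star U *ᵥ x with hy
  have hUU : U * star U = 1 := (Matrix.mem_unitaryGroup_iff).mp hM.eigenvectorUnitary.2
  have hdot : ∀ z : Fin n → ℝ, x ⬝ᵥ (U *ᵥ z) = y ⬝ᵥ z := by
    intro z
    rw [Matrix.dotProduct_mulVec]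
    congr 1
    rw [hy, ← Matrix.mulVec_transpose, Matrix.star_eq_conjTranspose,
      conjTranspose_eq_transpose_of_trivial]
  constructor
  · conv_lhs => rw [hM.spectral_theorem]
    rw [Unitary.conjStarAlgAut_apply, ← Matrix.mulVec_mulVec, ← Matrix.mulVec_mulVec, hdot]
    simp only [dotProduct, Matrix.mulVec_diagonal]
    refine Finset.sum_congr rfl fun i _ => ?_
    rw [← hU, ← hy]
    simp only [Function.comp_apply]
    norm_num
    ring
  · have : x ⬝ᵥ x = x ⬝ᵥ (U *ᵥ (star U *ᵥ x)) := by
      rw [Matrix.mulVec_mulVec, hUU, Matrix.one_mulVec]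
    rw [this, hdot, ← hy]
    simp only [dotProduct]
    exact Finset.sum_congr rfl fun i _ => (sq (y i)).symm

private lemma rayleigh_upper {n : ℕ} (M : Matrix (Fin n) (Fin n) ℝ) (hM : M.IsHermitian)
    (x : Fin n → ℝ) : x ⬝ᵥ (M *ᵥ x) ≤ (⨆ i, hM.eigenvalues i) * (x ⬝ᵥ x) := by
  obtain ⟨h1, h2⟩ := dot_reduce M hM x
  rw [h1, h2, Finset.mul_sum]
  refine Finset.sum_le_sum fun i _ => ?_
  have : hM.eigenvalues i ≤ ⨆ i, hM.eigenvalues i :=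
    le_ciSup (Set.Finite.bddAbove (Set.finite_range _)) i
  nlinarith [sq_nonneg ((star (hM.eigenvectorUnitary : Matrix (Fin n) (Fin n) ℝ) *ᵥ x) i)]

private lemma rayleigh_lower {n : ℕ} (M : Matrix (Fin n) (Fin n) ℝ) (hM : M.IsHermitian)
    (x : Fin n → ℝ) : (⨅ i, hM.eigenvalues i) * (x ⬝ᵥ x) ≤ x ⬝ᵥ (M *ᵥ x) := by
  obtain ⟨h1, h2⟩ := dot_reduce M hM x
  rw [h1, h2, Finset.mul_sum]
  refine Finset.sum_le_sum fun i _ => ?_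
  have : (⨅ i, hM.eigenvalues i) ≤ hM.eigenvalues i :=
    ciInf_le (Set.Finite.bddBelow (Set.finite_range _)) i
  nlinarith [sq_nonneg ((star (hM.eigenvectorUnitary : Matrix (Fin n) (Fin n) ℝ) *ᵥ x) i)]

private lemma cs_P {n : ℕ} {P : Matrix (Fin n) (Fin n) ℝ} (hP : P.PosSemidef)
    (u v : Fin n → ℝ) :
    u ⬝ᵥ (P *ᵥ v) ≤ Real.sqrt (u ⬝ᵥ (P *ᵥ u)) * Real.sqrt (v ⬝ᵥ (P *ᵥ v)) := by
  have hnn : ∀ w : Fin n → ℝ, 0 ≤ w ⬝ᵥ (P *ᵥ w) := by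
    intro w
    have := hP.dotProduct_mulVec_nonneg w
    simpa using this
  have hquad : ∀ t : ℝ, 0 ≤ (u ⬝ᵥ (P *ᵥ u)) * (t * t) + (2 * (u ⬝ᵥ (P *ᵥ v))) * t + v ⬝ᵥ (P *ᵥ v) := by
    intro t
    have h := hnn (t • u + v)
    have hsym := dot_sym hP.1 v u
    simp only [Matrix.mulVec_add, Matrix.mulVec_smul, dotProduct_add,
      add_dotProduct, smul_dotProduct, dotProduct_smul,
      smul_eq_mul] at h
    rw [hsym] at h
    exact h.trans_eq (by ring)
  have hd := discrim_le_zero hquad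
  rw [discrim] at hd
  have hsq : (u ⬝ᵥ (P *ᵥ v))^2 ≤ (u ⬝ᵥ (P *ᵥ u)) * (v ⬝ᵥ (P *ᵥ v)) := by nlinarith
  calc u ⬝ᵥ (P *ᵥ v) ≤ |u ⬝ᵥ (P *ᵥ v)| := le_abs_self _
    _ = Real.sqrt ((u ⬝ᵥ (P *ᵥ v))^2) := (Real.sqrt_sq_eq_abs _).symm
    _ ≤ Real.sqrt ((u ⬝ᵥ (P *ᵥ u)) * (v ⬝ᵥ (P *ᵥ v))) := Real.sqrt_le_sqrt hsq
    _ = Real.sqrt (u ⬝ᵥ (P *ᵥ u)) * Real.sqrt (v ⬝ᵥ (P *ᵥ v)) := Real.sqrt_mul (hnn u) _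

theorem lyapunov_derivative_lower_bound (n : ℕ)
    (A P Q : Matrix (Fin n) (Fin n) ℝ) (hP : P.PosDef) (hQ : Q.PosDef)
    (hLyap : Aᵀ * P + P * A = -Q)
    (β : ℝ) (u x : ℝ → (Fin n → ℝ))
    (hu : Continuous u)
    (hub : ∀ t, Real.sqrt (dotProduct (u t) (P.mulVec (u t))) ≤ β)
    (hx : ∀ t, HasDerivAt x (A.mulVec (x t) + u t) t) :
    ∀ t, -((⨆ i, hQ.1.eigenvalues i) / (⨅ i, hP.1.eigenvalues i)) *
          dotProduct (x t) (P.mulVec (x t)) -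
        2 * β * Real.sqrt (dotProduct (x t) (P.mulVec (x t))) ≤
      deriv (fun s => dotProduct (x s) (P.mulVec (x s))) t := by
  intro t
  set v : Fin n → ℝ := x t with hv
  set w : Fin n → ℝ := u t with hw
  set x' : Fin n → ℝ := A *ᵥ v + w with hx'
  -- derivative computation
  have hderiv : HasDerivAt (fun s => dotProduct (x s) (P.mulVec (x s)))
      (x' ⬝ᵥ (P *ᵥ v) + v ⬝ᵥ (P *ᵥ x')) t := by
    have hxi : ∀ i, HasDerivAt (fun s => x s i) (x' i) t := fun i =>
      hasDerivAt_pi.1 (hx t) i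
    have hPi : ∀ i, HasDerivAt (fun s => (P *ᵥ x s) i) ((P *ᵥ x') i) t := by
      intro i
      simp only [Matrix.mulVec, dotProduct]
      exact HasDerivAt.fun_sum fun j _ => (hxi j).const_mul (P i j)
    have := HasDerivAt.fun_sum (fun i (_ : i ∈ Finset.univ) => (hxi i).fun_mul (hPi i))
    convert this using 1
    · rfl
    · rfl
    · ext s; simp only [dotProduct]
    simp only [dotProduct, Finset.sum_add_distrib]
    rfl
  have hderiv' : deriv (fun s => dotProduct (x s) (P.mulVec (x s))) t
      = x' ⬝ᵥ (P *ᵥ v) + v ⬝ᵥ (P *ᵥ x') := hderiv.deriv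
  -- algebraic identity
  have key : x' ⬝ᵥ (P *ᵥ v) + v ⬝ᵥ (P *ᵥ x')
      = -(v ⬝ᵥ (Q *ᵥ v)) + 2 * (w ⬝ᵥ (P *ᵥ v)) := by
    have h1 : (A *ᵥ v) ⬝ᵥ (P *ᵥ v) = v ⬝ᵥ ((Aᵀ * P) *ᵥ v) := by
      conv_rhs => rw [← Matrix.mulVec_mulVec, Matrix.dotProduct_mulVec,
        ← Matrix.mulVec_transpose, Matrix.transpose_transpose]
    have h2 : v ⬝ᵥ (P *ᵥ (A *ᵥ v)) = v ⬝ᵥ ((P * A) *ᵥ v) := by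
      rw [Matrix.mulVec_mulVec]
    have h3 : v ⬝ᵥ (P *ᵥ w) = w ⬝ᵥ (P *ᵥ v) := dot_sym hP.1 v w
    have h4 : v ⬝ᵥ ((Aᵀ * P) *ᵥ v) + v ⬝ᵥ ((P * A) *ᵥ v) = -(v ⬝ᵥ (Q *ᵥ v)) := by
      rw [← dotProduct_add, ← Matrix.add_mulVec, hLyap, Matrix.neg_mulVec,
        dotProduct_neg]
    simp only [hx', add_dotProduct, Matrix.mulVec_add, dotProduct_add]
    rw [h1, h2, h3] at *
    linarith
  rw [hderiv', key]
  set V : ℝ := v ⬝ᵥ (P *ᵥ v) with hV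
  have hVnn : 0 ≤ V := by
    have := hP.posSemidef.dotProduct_mulVec_nonneg v; simpa using this
  -- bound on the Q term
  have hQbound : v ⬝ᵥ (Q *ᵥ v) ≤ ((⨆ i, hQ.1.eigenvalues i) / (⨅ i, hP.1.eigenvalues i)) * V := by
    rcases Nat.eq_zero_or_pos n with hn | hn
    · subst hn
      simp [dotProduct, hV]
    · haveI : Nonempty (Fin n) := ⟨⟨0, hn⟩⟩
      set sP : ℝ := ⨅ i, hP.1.eigenvalues i with hsP
      set SQ : ℝ := ⨆ i, hQ.1.eigenvalues i with hSQ
      have hsPpos : 0 < sP := by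
        obtain ⟨i, hi⟩ := exists_eq_ciInf_of_finite (f := hP.1.eigenvalues)
        rw [hsP, ← hi]; exact hP.eigenvalues_pos i
      have hSQpos : 0 < SQ := by
        obtain ⟨i, hi⟩ := exists_eq_ciSup_of_finite (f := hQ.1.eigenvalues)
        rw [hSQ, ← hi]; exact hQ.eigenvalues_pos i
      have hup := rayleigh_upper Q hQ.1 v
      have hlow := rayleigh_lower P hP.1 v
      rw [← hSQ] at hup
      rw [← hsP, ← hV] at hlow
      have h1 : SQ / sP * (sP * (v ⬝ᵥ v)) ≤ SQ / sP * V :=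
        mul_le_mul_of_nonneg_left hlow (by positivity)
      have h2 : SQ / sP * (sP * (v ⬝ᵥ v)) = SQ * (v ⬝ᵥ v) := by
        field_simp
      linarith
  -- bound on the cross term
  have hcross : -(β * Real.sqrt V) ≤ w ⬝ᵥ (P *ᵥ v) := by
    have hcs := cs_P hP.posSemidef (-w) v
    rw [neg_dotProduct] at hcs
    have hww : Real.sqrt ((-w) ⬝ᵥ (P *ᵥ (-w))) = Real.sqrt (w ⬝ᵥ (P *ᵥ w)) := by
      rw [Matrix.mulVec_neg, neg_dotProduct, dotProduct_neg, neg_neg]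
    rw [hww] at hcs
    have hβ := hub t
    have hsV : (0:ℝ) ≤ Real.sqrt V := Real.sqrt_nonneg _
    nlinarith [Real.sqrt_nonneg (w ⬝ᵥ (P *ᵥ w))]
  linarith
end
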